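/- (Rademacher complexity for ℓ∞-bounded dictionary regressors) In the setting of the previous statement, with F_{B,∞} the class of cell-constant functions with max_i |f(Kᵢ)| ≤ B and a λ-Lipschitz loss Λ(y f(x)), the empirical Rademacher complexity satisfies R(F_{B,∞}, S) ≤ (λB/N) ∑ᵢ₌₁^K √Nᵢ. -/

import Mathlib

/-
Talagrand's contraction principle strips the `λ`-Lipschitz loss at the price of a factor `λ`:
pairing every sign vector `σ` with the one flipped in a single coordinate `k` reduces it to an
inequality between two suprema over the class, and the coordinates are replaced one at a time.
For a cell-constant `g` the remaining Rademacher sum regroups by cell as `∑ᵢ g(Kᵢ) sᵢ(σ)`,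
with `sᵢ(σ) = ∑_{xₙ ∈ Kᵢ} σₙ yₙ`, so by Hölder its supremum over `‖g‖∞ ≤ B` is at most
`B ∑ᵢ |sᵢ(σ)|`.
Finally the signs are orthogonal, so `E sᵢ² = Nᵢ`, and Cauchy–Schwarz gives `E |sᵢ| ≤ √Nᵢ`.
-/

open Finset

/-- `±1` value of a `Bool`. -/
def radR (b : Bool) : ℝ := if b then 1 else -1

open NNReal

lemma abs_radR (b : Bool) : |radR b| = 1 := by cases b <;> simp [radR]

lemma radR_not (b : Bool) : radR (!b) = -radR b := by cases b <;> simp [radR]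

lemma radR_sq (b : Bool) : radR b ^ 2 = 1 := by cases b <;> norm_num [radR]

section SignVectors

variable {ι : Type*} [DecidableEq ι]

def flipAt (k : ι) (σ : ι → Bool) : ι → Bool := Function.update σ k (!σ k)

@[simp] lemma flipAt_self (k : ι) (σ : ι → Bool) : flipAt k σ k = !σ k :=
  Function.update_self _ _ _

lemma flipAt_of_ne {k n : ι} (h : n ≠ k) (σ : ι → Bool) : flipAt k σ n = σ n :=
  Function.update_of_ne h _ _

lemma flipAt_involutive (k : ι) : Function.Involutive (flipAt k) := by
  intro σ
  funext n
  rcases eq_or_ne n k with rfl | h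
  · simp
  · rw [flipAt_of_ne h, flipAt_of_ne h]

variable [Fintype ι]

lemma sum_comp_flipAt {M : Type*} [AddCommMonoid M] (k : ι) (f : (ι → Bool) → M) :
    ∑ σ, f (flipAt k σ) = ∑ σ, f σ :=
  Equiv.sum_comp (flipAt_involutive k).toPerm f

lemma sum_radR_mul_radR_of_ne {n m : ι} (h : n ≠ m) :
    ∑ σ : ι → Bool, radR (σ n) * radR (σ m) = 0 := by
  have hanti := sum_comp_flipAt n fun σ => radR (σ n) * radR (σ m)
  simp only [flipAt_self, flipAt_of_ne h.symm, radR_not, neg_mul, sum_neg_distrib] at hanti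
  linarith

lemma sum_radR_mul_radR (n m : ι) :
    ∑ σ : ι → Bool, radR (σ n) * radR (σ m) = if n = m then 2 ^ Fintype.card ι else 0 := by
  split_ifs with h
  · subst h
    simp_rw [← sq, radR_sq]
    simp
  · exact sum_radR_mul_radR_of_ne h

lemma sum_sq_sum_radR_mul (A : Finset ι) (a : ι → ℝ) :
    ∑ σ : ι → Bool, (∑ n ∈ A, radR (σ n) * a n) ^ 2
      = 2 ^ Fintype.card ι * ∑ n ∈ A, a n ^ 2 := by
  calc ∑ σ : ι → Bool, (∑ n ∈ A, radR (σ n) * a n) ^ 2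
      = ∑ n ∈ A, ∑ m ∈ A, a n * a m * ∑ σ : ι → Bool, radR (σ n) * radR (σ m) := by
        simp_rw [sq, sum_mul_sum, mul_sum]
        rw [sum_comm]
        refine sum_congr rfl fun n _ => ?_
        rw [sum_comm]
        exact sum_congr rfl fun m _ => sum_congr rfl fun σ _ => by ring
    _ = 2 ^ Fintype.card ι * ∑ n ∈ A, a n ^ 2 := by
        simp_rw [sum_radR_mul_radR, mul_ite, mul_zero, sum_ite_eq, mul_sum]
        exact sum_congr rfl fun n hn => by rw [if_pos hn]; ring

lemma sum_abs_sum_radR_mul_le (A : Finset ι) (a : ι → ℝ) :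
    ∑ σ : ι → Bool, |∑ n ∈ A, radR (σ n) * a n|
      ≤ 2 ^ Fintype.card ι * √(∑ n ∈ A, a n ^ 2) := by
  have hcs := sq_sum_le_card_mul_sum_sq (s := (univ : Finset (ι → Bool)))
    (f := fun σ => |∑ n ∈ A, radR (σ n) * a n|)
  simp_rw [sq_abs, sum_sq_sum_radR_mul, card_univ, Fintype.card_fun, Fintype.card_bool] at hcs
  calc _ ≤ √(((2 : ℝ) ^ Fintype.card ι) ^ 2 * ∑ n ∈ A, a n ^ 2) :=
        Real.le_sqrt_of_sq_le (by push_cast at hcs; linarith)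
    _ = _ := by
        rw [Real.sqrt_mul (by positivity), Real.sqrt_sq (by positivity)]

end SignVectors

section Contraction

variable {ι G : Type*} [Fintype ι]

lemma bddAbove_range_sum_radR_mul (σ : ι → Bool) {v : ι → G → ℝ} {M : ℝ}
    (hv : ∀ n g, |v n g| ≤ M) : BddAbove (Set.range fun g => ∑ n, radR (σ n) * v n g) := by
  refine ⟨∑ _n : ι, M, ?_⟩
  rintro _ ⟨g, rfl⟩
  refine sum_le_sum fun n _ => (le_abs_self _).trans ?_
  rw [abs_mul, abs_radR, one_mul]
  exact hv n g

variable [DecidableEq ι]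

/-- `2 ^ |ι|` times the empirical Rademacher complexity of the vectors `(v n g)ₙ`, `g : G`. -/
noncomputable def rademacherSum (v : ι → G → ℝ) : ℝ :=
  ∑ σ : ι → Bool, ⨆ g, ∑ n, radR (σ n) * v n g

lemma rademacherSum_const_mul {a : ℝ} (ha : 0 ≤ a) (v : ι → G → ℝ) :
    rademacherSum (fun n g => a * v n g) = a * rademacherSum v := by
  simp_rw [rademacherSum, mul_sum, Real.mul_iSup_of_nonneg ha, mul_sum, mul_left_comm]

variable [Nonempty G]

/-- Split on the sign of `q x - q y`: `p x - p y ≤ |q x - q y|` is then dominated by one of the two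
pairings of the right-hand suprema. -/
lemma ciSup_add_add_ciSup_sub_le (A p q : G → ℝ) (hpq : ∀ x y, |p x - p y| ≤ |q x - q y|)
    (hadd : BddAbove (Set.range fun g => A g + q g))
    (hsub : BddAbove (Set.range fun g => A g - q g)) :
    (⨆ g, A g + p g) + (⨆ g, A g - p g) ≤ (⨆ g, A g + q g) + (⨆ g, A g - q g) := by
  refine ciSup_add_ciSup_le fun x y => ?_
  have hp : p x - p y ≤ |q x - q y| := (le_abs_self _).trans (hpq x y)
  rcases le_total (q y) (q x) with h | h
  · rw [abs_of_nonneg (sub_nonneg.2 h)] at hp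
    linarith [le_ciSup hadd x, le_ciSup hsub y]
  · rw [abs_of_nonpos (sub_nonpos.2 h)] at hp
    linarith [le_ciSup hadd y, le_ciSup hsub x]

/-- Pairing each `σ` with `flipAt k σ` reduces the claim to `ciSup_add_add_ciSup_sub_le`. -/
lemma rademacherSum_le_of_eq_of_ne (k : ι) {u v : ι → G → ℝ} (huv : ∀ n ≠ k, u n = v n)
    (hk : ∀ x y, |u k x - u k y| ≤ |v k x - v k y|) {M : ℝ} (hv : ∀ n g, |v n g| ≤ M) :
    rademacherSum u ≤ rademacherSum v := by
  set S : (ι → G → ℝ) → (ι → Bool) → ℝ := fun w σ => ⨆ g, ∑ n, radR (σ n) * w n g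
  have hpair : ∀ σ, S u σ + S u (flipAt k σ) ≤ S v σ + S v (flipAt k σ) := by
    intro σ
    set A : G → ℝ := fun g => ∑ n ∈ univ.erase k, radR (σ n) * v n g
    have hsplit : ∀ (w : ι → G → ℝ), (∀ n ≠ k, w n = v n) → ∀ g,
        ∑ n, radR (σ n) * w n g = A g + radR (σ k) * w k g ∧
        ∑ n, radR (flipAt k σ n) * w n g = A g - radR (σ k) * w k g := by
      intro w hw g
      have hoff : ∀ τ : ι → Bool, (∀ n ≠ k, τ n = σ n) →
          ∑ n ∈ univ.erase k, radR (τ n) * w n g = A g := fun τ hτ =>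
        sum_congr rfl fun n hn => by rw [hτ n (ne_of_mem_erase hn), hw n (ne_of_mem_erase hn)]
      rw [← add_sum_erase _ _ (mem_univ k), ← add_sum_erase _ _ (mem_univ k),
        hoff σ fun _ _ => rfl, hoff (flipAt k σ) fun n hn => flipAt_of_ne hn σ,
        flipAt_self, radR_not]
      constructor <;> ring
    simp only [S, fun g => (hsplit u huv g).1, fun g => (hsplit u huv g).2,
      fun g => (hsplit v (fun _ _ => rfl) g).1, fun g => (hsplit v (fun _ _ => rfl) g).2]
    refine ciSup_add_add_ciSup_sub_le A _ _ (fun x y => ?_) ?_ ?_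
    · rw [← mul_sub, ← mul_sub, abs_mul, abs_mul, abs_radR, one_mul, one_mul]
      exact hk x y
    · simpa only [fun g => (hsplit v (fun _ _ => rfl) g).1] using
        bddAbove_range_sum_radR_mul σ hv
    · simpa only [fun g => (hsplit v (fun _ _ => rfl) g).2] using
        bddAbove_range_sum_radR_mul (flipAt k σ) hv
  have htwice : ∀ w, 2 * rademacherSum w = ∑ σ, (S w σ + S w (flipAt k σ)) := fun w => by
    rw [sum_add_distrib, sum_comp_flipAt k (S w), two_mul]
    exact rfl
  linarith [htwice u, htwice v, sum_le_sum fun σ (_ : σ ∈ univ) => hpair σ]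

/-- Replace the coordinates of `u` by those of `v` one at a time. -/
lemma rademacherSum_le_of_abs_sub_le {u v : ι → G → ℝ}
    (huv : ∀ n x y, |u n x - u n y| ≤ |v n x - v n y|) {M : ℝ}
    (hu : ∀ n g, |u n g| ≤ M) (hv : ∀ n g, |v n g| ≤ M) :
    rademacherSum u ≤ rademacherSum v := by
  let w : Finset ι → ι → G → ℝ := fun s n => if n ∈ s then v n else u n
  have hw : ∀ s, rademacherSum u ≤ rademacherSum (w s) := by
    intro s
    induction s using Finset.induction_on with
    | empty => simp [w]
    | @insert k s hk ih =>
      refine ih.trans (rademacherSum_le_of_eq_of_ne k (fun n hn => ?_) ?_ (M := M) ?_)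
      · simp [w, hn]
      · simpa [w, hk] using huv k
      · intro n g
        simp only [w]
        split_ifs
        exacts [hv n g, hu n g]
  simpa [w] using hw univ

lemma LipschitzWith.rademacherSum_comp_le {Λ : ℝ → ℝ} {lam : ℝ≥0} (hΛ : LipschitzWith lam Λ)
    {t : ι → G → ℝ} {B : ℝ} (ht : ∀ n g, |t n g| ≤ B) :
    rademacherSum (fun n g => Λ (t n g)) ≤ rademacherSum (fun n g => lam * t n g) := by
  have hlip : ∀ a b, |Λ a - Λ b| ≤ lam * |a - b| := by
    simpa only [Real.dist_eq] using hΛ.dist_le_mul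
  refine rademacherSum_le_of_abs_sub_le (M := |Λ 0| + lam * B) (fun n x y => ?_)
    (fun n g => ?_) (fun n g => ?_)
  · rw [← mul_sub, abs_mul, NNReal.abs_eq]
    exact hlip _ _
  · have := hlip (t n g) 0
    rw [sub_zero] at this
    have := mul_le_mul_of_nonneg_left (ht n g) lam.coe_nonneg
    linarith [abs_sub_abs_le_abs_sub (Λ (t n g)) (Λ 0)]
  · rw [abs_mul, NNReal.abs_eq]
    linarith [abs_nonneg (Λ 0), mul_le_mul_of_nonneg_left (ht n g) lam.coe_nonneg]

end Contraction

lemma nonempty_abs_le_of_nonneg {κ : Type*} {B : ℝ} (hB : 0 ≤ B) :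
    Nonempty {g : κ → ℝ // ∀ i, |g i| ≤ B} :=
  ⟨⟨0, fun _ => by simpa using hB⟩⟩

section Dictionary

variable {ι κ : Type*} [Fintype ι] [Fintype κ] [DecidableEq κ]

lemma sum_mul_comp_le_mul_sum_abs (c : ι → κ) (w : ι → ℝ) {g : κ → ℝ} {B : ℝ}
    (hg : ∀ i, |g i| ≤ B) :
    ∑ n, w n * g (c n) ≤ B * ∑ i, |∑ n with c n = i, w n| := by
  rw [← sum_fiberwise univ c, mul_sum]
  refine sum_le_sum fun i _ => ?_
  calc ∑ n with c n = i, w n * g (c n) = (∑ n with c n = i, w n) * g i :=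
        (sum_congr rfl fun n hn => by rw [(mem_filter.1 hn).2]).trans (sum_mul _ _ _).symm
    _ ≤ |∑ n with c n = i, w n| * |g i| := (le_abs_self _).trans (abs_mul _ _).le
    _ ≤ B * |∑ n with c n = i, w n| := by
        rw [mul_comm]; exact mul_le_mul_of_nonneg_right (hg i) (abs_nonneg _)

variable [DecidableEq ι]

lemma rademacherSum_cellConstant_le (c : ι → κ) (y : ι → Bool) {B : ℝ} (hB : 0 ≤ B) :
    rademacherSum (G := {g : κ → ℝ // ∀ i, |g i| ≤ B}) (fun n g => radR (y n) * g.1 (c n))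
      ≤ 2 ^ Fintype.card ι * (B * ∑ i, √(#{n | c n = i} : ℝ)) := by
  have := nonempty_abs_le_of_nonneg (κ := κ) hB
  calc rademacherSum (G := {g : κ → ℝ // ∀ i, |g i| ≤ B}) (fun n g => radR (y n) * g.1 (c n))
      ≤ ∑ σ : ι → Bool, B * ∑ i, |∑ n with c n = i, radR (σ n) * radR (y n)| :=
        sum_le_sum fun σ _ => ciSup_le fun g => by
          simpa only [mul_assoc] using
            sum_mul_comp_le_mul_sum_abs c (fun n => radR (σ n) * radR (y n)) g.2
    _ = B * ∑ i, ∑ σ : ι → Bool, |∑ n with c n = i, radR (σ n) * radR (y n)| := by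
        rw [← mul_sum, sum_comm]
    _ ≤ B * ∑ i, 2 ^ Fintype.card ι * √(#{n | c n = i} : ℝ) := by
        gcongr with i
        simpa only [radR_sq, sum_const, nsmul_eq_mul, mul_one] using
          sum_abs_sum_radR_mul_le {n | c n = i} (fun n => radR (y n))
    _ = 2 ^ Fintype.card ι * (B * ∑ i, √(#{n | c n = i} : ℝ)) := by
        rw [← mul_sum]; ring

end Dictionary

theorem rademacher_linf_dictionary_general {K N : ℕ}
    (c : Fin N → Fin K) (y : Fin N → Bool)
    (Λ : ℝ → ℝ) (lam : NNReal) (hΛ : LipschitzWith lam Λ)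
    (B : ℝ) (hB : 0 ≤ B) :
    ((2 : ℝ) ^ N)⁻¹ * ∑ σ : Fin N → Bool,
        (⨆ g : {g : Fin K → ℝ // ∀ i, |g i| ≤ B},
          (1 / N : ℝ) * ∑ n, radR (σ n) * Λ (radR (y n) * g.1 (c n)))
      ≤ ((lam : ℝ) * B / N) *
          ∑ i : Fin K, Real.sqrt ((univ.filter fun n => c n = i).card : ℝ) := by
  set G := {g : Fin K → ℝ // ∀ i, |g i| ≤ B}
  have := nonempty_abs_le_of_nonneg (κ := Fin K) hB
  have hbound : ∀ n (g : G), |radR (y n) * g.1 (c n)| ≤ B := fun n g => by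
    rw [abs_mul, abs_radR, one_mul]; exact g.2 (c n)
  have hsum : rademacherSum (fun n (g : G) => Λ (radR (y n) * g.1 (c n)))
      ≤ 2 ^ N * (lam * B * ∑ i, √(#{n | c n = i} : ℝ)) :=
    calc _ ≤ rademacherSum (fun n (g : G) => lam * (radR (y n) * g.1 (c n))) :=
          hΛ.rademacherSum_comp_le hbound
      _ = lam * rademacherSum (fun n (g : G) => radR (y n) * g.1 (c n)) :=
          rademacherSum_const_mul lam.coe_nonneg _
      _ ≤ lam * (2 ^ N * (B * ∑ i, √(#{n | c n = i} : ℝ))) := by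
          gcongr
          simpa only [Fintype.card_fin] using rademacherSum_cellConstant_le c y hB
      _ = 2 ^ N * (lam * B * ∑ i, √(#{n | c n = i} : ℝ)) := by ring
  simp_rw [← Real.mul_iSup_of_nonneg (by positivity : (0 : ℝ) ≤ 1 / N), ← mul_sum]
  calc _ ≤ ((2 : ℝ) ^ N)⁻¹ * (1 / N * (2 ^ N * (lam * B * ∑ i, √(#{n | c n = i} : ℝ)))) := by
        gcongr; exact hsum
    _ = _ := by rw [inv_mul_eq_iff_eq_mul₀ (by positivity)]; ring

/-- Empirical Rademacher complexity for `ℓ∞`-bounded dictionary regressors: with inputs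
in `K` cells (the `n`-th sample lying in cell `c n` with label `y n` and `Nᵢ` samples in
cell `i`), the class `F_{B,∞}` of cell-constant real functions with `maxᵢ |f(Kᵢ)| ≤ B`,
and a loss `ℓ(f,x,y) = Λ(y f(x))` with `Λ` `λ`-Lipschitz, one has
`R(F_{B,∞},S) ≤ (λB/N) ∑ᵢ √Nᵢ`. -/
theorem rademacher_linf_dictionary {K N : ℕ} (hN : 0 < N)
    (c : Fin N → Fin K) (y : Fin N → Bool)
    (Λ : ℝ → ℝ) (lam : NNReal) (hΛ : LipschitzWith lam Λ)
    (B : ℝ) (hB : 0 ≤ B) :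
    ((2 : ℝ) ^ N)⁻¹ * ∑ σ : Fin N → Bool,
        (⨆ g : {g : Fin K → ℝ // ∀ i, |g i| ≤ B},
          (1 / N : ℝ) * ∑ n, radR (σ n) * Λ (radR (y n) * g.1 (c n)))
      ≤ ((lam : ℝ) * B / N) *
          ∑ i : Fin K, Real.sqrt ((univ.filter fun n => c n = i).card : ℝ) :=
  rademacher_linf_dictionary_general c y Λ lam hΛ B hB
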